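/- Fix an integer n ≥ 2 and let f₁ be defined by f₁(x) = Λ_n(x) + 2^{−3n}·[ (Λ₁(x−π−1) + Λ₁(x−2π+1))^n + (Λ₁(x+π+1) + Λ₁(x+2π−1))^n ] + 2^{−4n}·[ (Λ₁(x−11) + Λ₁(x−12) + Λ₁(x−13) + Λ₁(x−14))^n + (Λ₁(x+11) + Λ₁(x+12) + Λ₁(x+13) + Λ₁(x+14))^n ], where Λ_α(x) = max{(1 − |x|)^α, 0}. Then the essential support of f₁ is S_{f₁} = (−15,−10) ∪ (−2π,−π) ∪ (−1,1) ∪ (π,2π) ∪ (10,15); in particular S_{f₁} has exactly 5 connected components. -/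
import Mathlib


open Complex MeasureTheory Set Pointwise ComplexOrder

noncomputable section

/-- `f : ℝ → ℂ` is positive definite. -/
def IsPosDefFn (f : ℝ → ℂ) : Prop :=
  ∀ (m : ℕ) (x : Fin m → ℝ) (c : Fin m → ℂ),
    0 ≤ ∑ j, ∑ k, f (x j - x k) * c j * (starRingEnd ℂ) (c k)

/-- `f ∈ PD(ℝ)`: continuous, not identically zero, positive definite. -/
def MemPD (f : ℝ → ℂ) : Prop :=
  Continuous f ∧ (∃ x, f x ≠ 0) ∧ IsPosDefFn f

/-- The essential support `S_f`. -/
def essSupp (f : ℝ → ℂ) : Set ℝ := {x | f x ≠ 0}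

/-- `D_n(f) = {g ∈ PD(ℝ) : g^n = f}`. -/
def Dset (n : ℕ) (f : ℝ → ℂ) : Set (ℝ → ℂ) :=
  {g | MemPD g ∧ ∀ x, g x ^ n = f x}

/-- The set of connected components of `S ⊆ ℝ`. -/
def comps (S : Set ℝ) : Set (Set ℝ) :=
  {C | ∃ x ∈ S, C = connectedComponentIn S x}

/-- The truncated power function `Λ_α(x) = (max (1 - |x|) 0) ^ α`
(for natural `α`; note `Λ₁ = Lam 1` and `Λ₁ ^ n = Λ_n`). -/
def Lam (α : ℕ) (x : ℝ) : ℝ := (max (1 - |x|) 0) ^ α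

/-- The function `f₁` of Example 3. -/
def f₁ (n : ℕ) (x : ℝ) : ℝ :=
  Lam n x
  + ((2 : ℝ) ^ (3 * n))⁻¹ *
      ((Lam 1 (x - Real.pi - 1) + Lam 1 (x - 2 * Real.pi + 1)) ^ n
        + (Lam 1 (x + Real.pi + 1) + Lam 1 (x + 2 * Real.pi - 1)) ^ n)
  + ((2 : ℝ) ^ (4 * n))⁻¹ *
      ((Lam 1 (x - 11) + Lam 1 (x - 12) + Lam 1 (x - 13) + Lam 1 (x - 14)) ^ n
        + (Lam 1 (x + 11) + Lam 1 (x + 12) + Lam 1 (x + 13) + Lam 1 (x + 14)) ^ n)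

lemma lam_nonneg (α : ℕ) (x : ℝ) : 0 ≤ Lam α x := pow_nonneg (le_max_right _ _) _

lemma lam_eq_zero_iff {α : ℕ} (hα : α ≠ 0) (x : ℝ) : Lam α x = 0 ↔ 1 ≤ |x| := by
  rw [Lam, pow_eq_zero_iff hα, max_eq_right_iff, sub_nonpos]

lemma f₁_eq_zero_iff {n : ℕ} (hn : n ≠ 0) (x : ℝ) :
    f₁ n x = 0 ↔
      Lam n x = 0 ∧ Lam 1 (x - Real.pi - 1) = 0 ∧ Lam 1 (x - 2 * Real.pi + 1) = 0 ∧
      Lam 1 (x + Real.pi + 1) = 0 ∧ Lam 1 (x + 2 * Real.pi - 1) = 0 ∧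
      Lam 1 (x - 11) = 0 ∧ Lam 1 (x - 12) = 0 ∧ Lam 1 (x - 13) = 0 ∧ Lam 1 (x - 14) = 0 ∧
      Lam 1 (x + 11) = 0 ∧ Lam 1 (x + 12) = 0 ∧ Lam 1 (x + 13) = 0 ∧ Lam 1 (x + 14) = 0 := by
  have L : ∀ (α : ℕ) (y : ℝ), 0 ≤ Lam α y := lam_nonneg
  have c1 : (0:ℝ) < ((2 : ℝ) ^ (3 * n))⁻¹ := by positivity
  have c2 : (0:ℝ) < ((2 : ℝ) ^ (4 * n))⁻¹ := by positivity
  constructor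
  · intro h
    rw [f₁] at h
    have hP : 0 ≤ Lam 1 (x - Real.pi - 1) + Lam 1 (x - 2 * Real.pi + 1) :=
      add_nonneg (L _ _) (L _ _)
    have hQ : 0 ≤ Lam 1 (x + Real.pi + 1) + Lam 1 (x + 2 * Real.pi - 1) :=
      add_nonneg (L _ _) (L _ _)
    have hR : 0 ≤ Lam 1 (x - 11) + Lam 1 (x - 12) + Lam 1 (x - 13) + Lam 1 (x - 14) :=
      add_nonneg (add_nonneg (add_nonneg (L _ _) (L _ _)) (L _ _)) (L _ _)
    have hT : 0 ≤ Lam 1 (x + 11) + Lam 1 (x + 12) + Lam 1 (x + 13) + Lam 1 (x + 14) :=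
      add_nonneg (add_nonneg (add_nonneg (L _ _) (L _ _)) (L _ _)) (L _ _)
    have hB : 0 ≤ ((2 : ℝ) ^ (3 * n))⁻¹ *
        ((Lam 1 (x - Real.pi - 1) + Lam 1 (x - 2 * Real.pi + 1)) ^ n
          + (Lam 1 (x + Real.pi + 1) + Lam 1 (x + 2 * Real.pi - 1)) ^ n) :=
      mul_nonneg c1.le (add_nonneg (pow_nonneg hP n) (pow_nonneg hQ n))
    have hC : 0 ≤ ((2 : ℝ) ^ (4 * n))⁻¹ *
        ((Lam 1 (x - 11) + Lam 1 (x - 12) + Lam 1 (x - 13) + Lam 1 (x - 14)) ^ n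
          + (Lam 1 (x + 11) + Lam 1 (x + 12) + Lam 1 (x + 13) + Lam 1 (x + 14)) ^ n) :=
      mul_nonneg c2.le (add_nonneg (pow_nonneg hR n) (pow_nonneg hT n))
    have hA0 : Lam n x = 0 := le_antisymm (by linarith [L n x]) (L n x)
    have hB0 : (Lam 1 (x - Real.pi - 1) + Lam 1 (x - 2 * Real.pi + 1)) ^ n
        + (Lam 1 (x + Real.pi + 1) + Lam 1 (x + 2 * Real.pi - 1)) ^ n = 0 := by
      have h0 : ((2 : ℝ) ^ (3 * n))⁻¹ *
          ((Lam 1 (x - Real.pi - 1) + Lam 1 (x - 2 * Real.pi + 1)) ^ n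
            + (Lam 1 (x + Real.pi + 1) + Lam 1 (x + 2 * Real.pi - 1)) ^ n) = 0 := by
        linarith [L n x]
      exact (mul_eq_zero.mp h0).resolve_left (ne_of_gt c1)
    have hC0 : (Lam 1 (x - 11) + Lam 1 (x - 12) + Lam 1 (x - 13) + Lam 1 (x - 14)) ^ n
        + (Lam 1 (x + 11) + Lam 1 (x + 12) + Lam 1 (x + 13) + Lam 1 (x + 14)) ^ n = 0 := by
      have h0 : ((2 : ℝ) ^ (4 * n))⁻¹ *
          ((Lam 1 (x - 11) + Lam 1 (x - 12) + Lam 1 (x - 13) + Lam 1 (x - 14)) ^ n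
            + (Lam 1 (x + 11) + Lam 1 (x + 12) + Lam 1 (x + 13) + Lam 1 (x + 14)) ^ n) = 0 := by
        linarith [L n x]
      exact (mul_eq_zero.mp h0).resolve_left (ne_of_gt c2)
    have hPn : Lam 1 (x - Real.pi - 1) + Lam 1 (x - 2 * Real.pi + 1) = 0 :=
      (pow_eq_zero_iff hn).mp (le_antisymm
        (by nlinarith [pow_nonneg hP n, pow_nonneg hQ n]) (pow_nonneg hP n))
    have hQn : Lam 1 (x + Real.pi + 1) + Lam 1 (x + 2 * Real.pi - 1) = 0 :=
      (pow_eq_zero_iff hn).mp (le_antisymm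
        (by nlinarith [pow_nonneg hP n, pow_nonneg hQ n]) (pow_nonneg hQ n))
    have hRn : Lam 1 (x - 11) + Lam 1 (x - 12) + Lam 1 (x - 13) + Lam 1 (x - 14) = 0 :=
      (pow_eq_zero_iff hn).mp (le_antisymm
        (by nlinarith [pow_nonneg hR n, pow_nonneg hT n]) (pow_nonneg hR n))
    have hTn : Lam 1 (x + 11) + Lam 1 (x + 12) + Lam 1 (x + 13) + Lam 1 (x + 14) = 0 :=
      (pow_eq_zero_iff hn).mp (le_antisymm
        (by nlinarith [pow_nonneg hR n, pow_nonneg hT n]) (pow_nonneg hT n))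
    refine ⟨hA0,
      le_antisymm (by linarith [L 1 (x - 2 * Real.pi + 1)]) (L _ _),
      le_antisymm (by linarith [L 1 (x - Real.pi - 1)]) (L _ _),
      le_antisymm (by linarith [L 1 (x + 2 * Real.pi - 1)]) (L _ _),
      le_antisymm (by linarith [L 1 (x + Real.pi + 1)]) (L _ _),
      le_antisymm (by linarith [L 1 (x - 12), L 1 (x - 13), L 1 (x - 14)]) (L _ _),
      le_antisymm (by linarith [L 1 (x - 11), L 1 (x - 13), L 1 (x - 14)]) (L _ _),
      le_antisymm (by linarith [L 1 (x - 11), L 1 (x - 12), L 1 (x - 14)]) (L _ _),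
      le_antisymm (by linarith [L 1 (x - 11), L 1 (x - 12), L 1 (x - 13)]) (L _ _),
      le_antisymm (by linarith [L 1 (x + 12), L 1 (x + 13), L 1 (x + 14)]) (L _ _),
      le_antisymm (by linarith [L 1 (x + 11), L 1 (x + 13), L 1 (x + 14)]) (L _ _),
      le_antisymm (by linarith [L 1 (x + 11), L 1 (x + 12), L 1 (x + 14)]) (L _ _),
      le_antisymm (by linarith [L 1 (x + 11), L 1 (x + 12), L 1 (x + 13)]) (L _ _)⟩
  · rintro ⟨h1, h2, h3, h4, h5, h6, h7, h8, h9, h10, h11, h12, h13⟩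
    rw [f₁, h1, h2, h3, h4, h5, h6, h7, h8, h9, h10, h11, h12, h13]
    simp [zero_pow hn]

lemma comp_eq {C D : Set ℝ} (hC : IsOpen C) (hD : IsOpen D) (hd : Disjoint C D)
    (hc : IsPreconnected C) {x : ℝ} (hx : x ∈ C) :
    connectedComponentIn (C ∪ D) x = C := by
  apply subset_antisymm
  · exact isPreconnected_connectedComponentIn.subset_left_of_subset_union hC hD hd
      (connectedComponentIn_subset _ _)
      ⟨x, mem_connectedComponentIn (Set.mem_union_left _ hx), hx⟩
  · exact hc.subset_connectedComponentIn hx Set.subset_union_left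

lemma ne_of_mem_notMem {α : Type*} {s t : Set α} {x : α} (hx : x ∈ s) (hx' : x ∉ t) :
    s ≠ t := fun h => hx' (h ▸ hx)

set_option maxHeartbeats 2000000 in
theorem essSupp_f₁ (n : ℕ) (hn : 2 ≤ n) :
    {x : ℝ | f₁ n x ≠ 0} =
        Set.Ioo (-15 : ℝ) (-10) ∪ Set.Ioo (-(2 * Real.pi)) (-Real.pi)
          ∪ Set.Ioo (-1 : ℝ) 1 ∪ Set.Ioo Real.pi (2 * Real.pi)
          ∪ Set.Ioo (10 : ℝ) 15 ∧
      (comps {x : ℝ | f₁ n x ≠ 0}).ncard = 5 := by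
  have hn' : n ≠ 0 := by omega
  have hπ3 : (3:ℝ) < Real.pi := Real.pi_gt_three
  have hπ4 : Real.pi < 3.15 := Real.pi_lt_d2
  have hS : {x : ℝ | f₁ n x ≠ 0} =
      Set.Ioo (-15 : ℝ) (-10) ∪ Set.Ioo (-(2 * Real.pi)) (-Real.pi)
        ∪ Set.Ioo (-1 : ℝ) 1 ∪ Set.Ioo Real.pi (2 * Real.pi)
        ∪ Set.Ioo (10 : ℝ) 15 := by
    ext x
    simp only [mem_setOf_eq, ne_eq, f₁_eq_zero_iff hn', lam_eq_zero_iff hn',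
      lam_eq_zero_iff one_ne_zero, Set.mem_union, Set.mem_Ioo]
    rw [not_iff_comm]
    simp only [not_or, not_and_or, not_lt]
    constructor
    · rintro ⟨⟨⟨⟨hI1, hI2⟩, hI3⟩, hI4⟩, hI5⟩
      refine ⟨?_, ?_, ?_, ?_, ?_, ?_, ?_, ?_, ?_, ?_, ?_, ?_, ?_⟩ <;> rw [le_abs]
      · rcases hI3 with h | h
        · right; linarith
        · left; linarith
      · rcases hI4 with h | h
        · right; linarith
        · left; linarith
      · rcases hI4 with h | h
        · right; linarith
        · left; linarith
      · rcases hI2 with h | h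
        · right; linarith
        · left; linarith
      · rcases hI2 with h | h
        · right; linarith
        · left; linarith
      · rcases hI5 with h | h
        · right; linarith
        · left; linarith
      · rcases hI5 with h | h
        · right; linarith
        · left; linarith
      · rcases hI5 with h | h
        · right; linarith
        · left; linarith
      · rcases hI5 with h | h
        · right; linarith
        · left; linarith
      · rcases hI1 with h | h
        · right; linarith
        · left; linarith
      · rcases hI1 with h | h
        · right; linarith
        · left; linarith
      · rcases hI1 with h | h
        · right; linarith
        · left; linarith
      · rcases hI1 with h | h
        · right; linarith
        · left; linarith
    · rintro ⟨h1, h2, h3, h4, h5, h6, h7, h8, h9, h10, h11, h12, h13⟩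
      rw [le_abs] at h1 h2 h3 h4 h5 h6 h7 h8 h9 h10 h11 h12 h13
      refine ⟨⟨⟨⟨?_, ?_⟩, ?_⟩, ?_⟩, ?_⟩
      · by_contra hc
        push_neg at hc
        obtain ⟨ha, hb⟩ := hc
        have hx1 : x ≤ -12 := by rcases h10 with h | h <;> linarith
        have hx2 : x ≤ -13 := by rcases h11 with h | h <;> linarith
        have hx3 : x ≤ -14 := by rcases h12 with h | h <;> linarith
        rcases h13 with h | h <;> linarith
      · by_contra hc
        push_neg at hc
        obtain ⟨ha, hb⟩ := hc
        have hx1 : x ≤ -Real.pi - 2 := by rcases h4 with h | h <;> linarith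
        rcases h5 with h | h <;> linarith
      · by_contra hc
        push_neg at hc
        obtain ⟨ha, hb⟩ := hc
        rcases h1 with h | h <;> linarith
      · by_contra hc
        push_neg at hc
        obtain ⟨ha, hb⟩ := hc
        have hx1 : Real.pi + 2 ≤ x := by rcases h2 with h | h <;> linarith
        rcases h3 with h | h <;> linarith
      · by_contra hc
        push_neg at hc
        obtain ⟨ha, hb⟩ := hc
        have hx1 : 12 ≤ x := by rcases h6 with h | h <;> linarith
        have hx2 : 13 ≤ x := by rcases h7 with h | h <;> linarith
        have hx3 : 14 ≤ x := by rcases h8 with h | h <;> linarith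
        rcases h9 with h | h <;> linarith
  refine ⟨hS, ?_⟩
  set I1 : Set ℝ := Set.Ioo (-15 : ℝ) (-10) with hI1
  set I2 : Set ℝ := Set.Ioo (-(2 * Real.pi)) (-Real.pi) with hI2
  set I3 : Set ℝ := Set.Ioo (-1 : ℝ) 1 with hI3
  set I4 : Set ℝ := Set.Ioo Real.pi (2 * Real.pi) with hI4
  set I5 : Set ℝ := Set.Ioo (10 : ℝ) 15 with hI5
  set S : Set ℝ := {x : ℝ | f₁ n x ≠ 0} with hSdef
  have hSu : S = I1 ∪ I2 ∪ I3 ∪ I4 ∪ I5 := hS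
  have o1 : IsOpen I1 := by rw [hI1]; exact isOpen_Ioo
  have o2 : IsOpen I2 := by rw [hI2]; exact isOpen_Ioo
  have o3 : IsOpen I3 := by rw [hI3]; exact isOpen_Ioo
  have o4 : IsOpen I4 := by rw [hI4]; exact isOpen_Ioo
  have o5 : IsOpen I5 := by rw [hI5]; exact isOpen_Ioo
  have p1 : IsPreconnected I1 := by rw [hI1]; exact isPreconnected_Ioo
  have p2 : IsPreconnected I2 := by rw [hI2]; exact isPreconnected_Ioo
  have p3 : IsPreconnected I3 := by rw [hI3]; exact isPreconnected_Ioo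
  have p4 : IsPreconnected I4 := by rw [hI4]; exact isPreconnected_Ioo
  have p5 : IsPreconnected I5 := by rw [hI5]; exact isPreconnected_Ioo
  have m1 : (-12 : ℝ) ∈ I1 := by rw [hI1, Set.mem_Ioo]; norm_num
  have m2 : (-4 : ℝ) ∈ I2 := by rw [hI2, Set.mem_Ioo]; constructor <;> linarith
  have m3 : (0 : ℝ) ∈ I3 := by rw [hI3, Set.mem_Ioo]; norm_num
  have m4 : (4 : ℝ) ∈ I4 := by rw [hI4, Set.mem_Ioo]; constructor <;> linarith
  have m5 : (12 : ℝ) ∈ I5 := by rw [hI5, Set.mem_Ioo]; norm_num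
  have dis : ∀ a b c d : ℝ, b ≤ c → Disjoint (Set.Ioo a b) (Set.Ioo c d) := by
    intro a b c d h
    apply Set.disjoint_left.mpr
    rintro x ⟨_, hx2⟩ ⟨hx3, _⟩
    linarith
  have d12 : Disjoint I1 I2 := by rw [hI1, hI2]; exact dis _ _ _ _ (by linarith)
  have d13 : Disjoint I1 I3 := by rw [hI1, hI3]; exact dis _ _ _ _ (by norm_num)
  have d14 : Disjoint I1 I4 := by rw [hI1, hI4]; exact dis _ _ _ _ (by linarith)
  have d15 : Disjoint I1 I5 := by rw [hI1, hI5]; exact dis _ _ _ _ (by norm_num)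
  have d23 : Disjoint I2 I3 := by rw [hI2, hI3]; exact dis _ _ _ _ (by linarith)
  have d24 : Disjoint I2 I4 := by rw [hI2, hI4]; exact dis _ _ _ _ (by linarith)
  have d25 : Disjoint I2 I5 := by rw [hI2, hI5]; exact dis _ _ _ _ (by linarith)
  have d34 : Disjoint I3 I4 := by rw [hI3, hI4]; exact dis _ _ _ _ (by linarith)
  have d35 : Disjoint I3 I5 := by rw [hI3, hI5]; exact dis _ _ _ _ (by norm_num)
  have d45 : Disjoint I4 I5 := by rw [hI4, hI5]; exact dis _ _ _ _ (by linarith)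
  have hrw : ∀ i ∈ ({I1, I2, I3, I4, I5} : Set (Set ℝ)), ∃ D : Set ℝ, IsOpen D ∧
      Disjoint i D ∧ S = i ∪ D := by
    intro i hi
    simp only [Set.mem_insert_iff, Set.mem_singleton_iff] at hi
    rcases hi with rfl | rfl | rfl | rfl | rfl
    · exact ⟨I2 ∪ I3 ∪ I4 ∪ I5, ((o2.union o3).union o4).union o5,
        by simp only [Set.disjoint_union_right]; exact ⟨⟨⟨d12, d13⟩, d14⟩, d15⟩,
        by rw [hSu]; ext x; simp only [Set.mem_union]; tauto⟩
    · exact ⟨I1 ∪ I3 ∪ I4 ∪ I5, ((o1.union o3).union o4).union o5,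
        by simp only [Set.disjoint_union_right]; exact ⟨⟨⟨d12.symm, d23⟩, d24⟩, d25⟩,
        by rw [hSu]; ext x; simp only [Set.mem_union]; tauto⟩
    · exact ⟨I1 ∪ I2 ∪ I4 ∪ I5, ((o1.union o2).union o4).union o5,
        by simp only [Set.disjoint_union_right]; exact ⟨⟨⟨d13.symm, d23.symm⟩, d34⟩, d35⟩,
        by rw [hSu]; ext x; simp only [Set.mem_union]; tauto⟩
    · exact ⟨I1 ∪ I2 ∪ I3 ∪ I5, ((o1.union o2).union o3).union o5,
        by simp only [Set.disjoint_union_right]; exact ⟨⟨⟨d14.symm, d24.symm⟩, d34.symm⟩, d45⟩,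
        by rw [hSu]; ext x; simp only [Set.mem_union]; tauto⟩
    · exact ⟨I1 ∪ I2 ∪ I3 ∪ I4, ((o1.union o2).union o3).union o4,
        by simp only [Set.disjoint_union_right]; exact ⟨⟨⟨d15.symm, d25.symm⟩, d35.symm⟩, d45.symm⟩,
        by rw [hSu]; ext x; simp only [Set.mem_union]; tauto⟩
  have hiopen : ∀ i ∈ ({I1, I2, I3, I4, I5} : Set (Set ℝ)), IsOpen i := by
    intro i hi
    simp only [Set.mem_insert_iff, Set.mem_singleton_iff] at hi
    rcases hi with rfl | rfl | rfl | rfl | rfl <;> assumption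
  have hipre : ∀ i ∈ ({I1, I2, I3, I4, I5} : Set (Set ℝ)), IsPreconnected i := by
    intro i hi
    simp only [Set.mem_insert_iff, Set.mem_singleton_iff] at hi
    rcases hi with rfl | rfl | rfl | rfl | rfl <;> assumption
  have hcomp : ∀ i ∈ ({I1, I2, I3, I4, I5} : Set (Set ℝ)), ∀ x ∈ i,
      connectedComponentIn S x = i := by
    intro i hi x hx
    obtain ⟨D, hD, hdis, hSD⟩ := hrw i hi
    rw [hSD]
    exact comp_eq (hiopen i hi) hD hdis (hipre i hi) hx
  have e1 : I1 ∈ ({I1, I2, I3, I4, I5} : Set (Set ℝ)) := Set.mem_insert _ _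
  have e2 : I2 ∈ ({I1, I2, I3, I4, I5} : Set (Set ℝ)) :=
    Set.mem_insert_of_mem _ (Set.mem_insert _ _)
  have e3 : I3 ∈ ({I1, I2, I3, I4, I5} : Set (Set ℝ)) :=
    Set.mem_insert_of_mem _ (Set.mem_insert_of_mem _ (Set.mem_insert _ _))
  have e4 : I4 ∈ ({I1, I2, I3, I4, I5} : Set (Set ℝ)) :=
    Set.mem_insert_of_mem _ (Set.mem_insert_of_mem _ (Set.mem_insert_of_mem _ (Set.mem_insert _ _)))
  have e5 : I5 ∈ ({I1, I2, I3, I4, I5} : Set (Set ℝ)) :=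
    Set.mem_insert_of_mem _ (Set.mem_insert_of_mem _ (Set.mem_insert_of_mem _
      (Set.mem_insert_of_mem _ rfl)))
  have hcompsEq : comps S = {I1, I2, I3, I4, I5} := by
    ext C
    constructor
    · rintro ⟨x, hx, rfl⟩
      rw [hSu] at hx
      rcases hx with (((hx | hx) | hx) | hx) | hx
      · rw [hcomp I1 e1 x hx]; exact e1
      · rw [hcomp I2 e2 x hx]; exact e2
      · rw [hcomp I3 e3 x hx]; exact e3
      · rw [hcomp I4 e4 x hx]; exact e4
      · rw [hcomp I5 e5 x hx]; exact e5
    · intro hC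
      simp only [Set.mem_insert_iff, Set.mem_singleton_iff] at hC
      rcases hC with rfl | rfl | rfl | rfl | rfl
      · exact ⟨-12, by rw [hSu]; exact Set.mem_union_left _ (Set.mem_union_left _
          (Set.mem_union_left _ (Set.mem_union_left _ m1))),
          (hcomp I1 e1 _ m1).symm⟩
      · exact ⟨-4, by rw [hSu]; exact Set.mem_union_left _ (Set.mem_union_left _
          (Set.mem_union_left _ (Set.mem_union_right _ m2))),
          (hcomp I2 e2 _ m2).symm⟩
      · exact ⟨0, by rw [hSu]; exact Set.mem_union_left _ (Set.mem_union_left _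
          (Set.mem_union_right _ m3)),
          (hcomp I3 e3 _ m3).symm⟩
      · exact ⟨4, by rw [hSu]; exact Set.mem_union_left _ (Set.mem_union_right _ m4),
          (hcomp I4 e4 _ m4).symm⟩
      · exact ⟨12, by rw [hSu]; exact Set.mem_union_right _ m5,
          (hcomp I5 e5 _ m5).symm⟩
  rw [hcompsEq]
  have n12 : I1 ≠ I2 := ne_of_mem_notMem m1 (by rw [hI2, Set.mem_Ioo]; rintro ⟨h, _⟩; linarith)
  have n13 : I1 ≠ I3 := ne_of_mem_notMem m1 (by rw [hI3, Set.mem_Ioo]; rintro ⟨h, _⟩; linarith)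
  have n14 : I1 ≠ I4 := ne_of_mem_notMem m1 (by rw [hI4, Set.mem_Ioo]; rintro ⟨h, _⟩; linarith)
  have n15 : I1 ≠ I5 := ne_of_mem_notMem m1 (by rw [hI5, Set.mem_Ioo]; rintro ⟨h, _⟩; linarith)
  have n23 : I2 ≠ I3 := ne_of_mem_notMem m2 (by rw [hI3, Set.mem_Ioo]; rintro ⟨h, _⟩; linarith)
  have n24 : I2 ≠ I4 := ne_of_mem_notMem m2 (by rw [hI4, Set.mem_Ioo]; rintro ⟨h, _⟩; linarith)
  have n25 : I2 ≠ I5 := ne_of_mem_notMem m2 (by rw [hI5, Set.mem_Ioo]; rintro ⟨h, _⟩; linarith)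
  have n34 : I3 ≠ I4 := ne_of_mem_notMem m3 (by rw [hI4, Set.mem_Ioo]; rintro ⟨h, _⟩; linarith)
  have n35 : I3 ≠ I5 := ne_of_mem_notMem m3 (by rw [hI5, Set.mem_Ioo]; rintro ⟨h, _⟩; linarith)
  have n45 : I4 ≠ I5 := ne_of_mem_notMem m4 (by rw [hI5, Set.mem_Ioo]; rintro ⟨h, _⟩; linarith)
  rw [Set.ncard_insert_of_notMem (by simp [n12, n13, n14, n15])
      (Set.Finite.insert _ (Set.Finite.insert _ (Set.Finite.insert _ (Set.finite_singleton _)))),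
    Set.ncard_insert_of_notMem (by simp [n23, n24, n25])
      (Set.Finite.insert _ (Set.Finite.insert _ (Set.finite_singleton _))),
    Set.ncard_insert_of_notMem (by simp [n34, n35])
      (Set.Finite.insert _ (Set.finite_singleton _)),
    Set.ncard_insert_of_notMem (by simp [n45]) (Set.finite_singleton _),
    Set.ncard_singleton]
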